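/- arXiv:2001.08397 — 2 statements merged into one kernel-verified Lean document; each statement's English description precedes it below -/
import Mathlib

section
/- For x ∈ SU(2) with x ≠ ±id, we have ζ^t(x) = id if and only if t ∈ (2π/sin θ)·ℤ, where θ = arccos(tr(x)/2) ∈ (0, π) and ζ^t(x) = exp(t(x - (tr(x)/2)·id)). If x = ±id then ζ^t(x) = id for all t. -/
/-!
Write `F = x - (tr x / 2)·1`. By Cayley–Hamilton, `F² = ((tr x / 2)² - det x)·1`, which for
`x ∈ SU(2)` (real trace, determinant one) is `-(sin θ)²·1`. For `μ ≠ 0`, any `F` with `F² = μ²·1`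
splits as `F = μ P - μ (1 - P)` along the idempotent `P = (1 + F/μ)/2`, so
`exp(tF) = e^{tμ} P + e^{-tμ} (1 - P)`. If `F` is not a scalar, neither `P` nor `1 - P` vanishes,
hence `exp(tF) = 1` iff `e^{tμ} = 1`; with `μ = i sin θ` this is `t ∈ (2π / sin θ)ℤ`.
For `x = ±1` we have `F = 0`.
-/

open Matrix

section Idempotent

variable {A : Type*} [Ring A] {P : A}

theorem IsIdempotentElem.smul_add_smul_one_sub_pow {R : Type*} [CommRing R] [Algebra R A]
    (hP : IsIdempotentElem P) (a b : R) (n : ℕ) :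
    (a • P + b • (1 - P)) ^ n = a ^ n • P + b ^ n • (1 - P) := by
  induction n with
  | zero => simp
  | succ n ih =>
    rw [pow_succ, ih]
    simp only [add_mul, mul_add, smul_mul_smul_comm, hP.eq, hP.one_sub.eq, hP.mul_one_sub_self,
      hP.one_sub_mul_self, smul_zero, add_zero, zero_add, pow_succ]

theorem IsIdempotentElem.smul_add_smul_one_sub_eq_one_iff {K : Type*} [Field K] [Algebra K A]
    (hP : IsIdempotentElem P) (hP0 : P ≠ 0) (hP1 : P ≠ 1) (a b : K) :
    a • P + b • (1 - P) = 1 ↔ a = 1 ∧ b = 1 := by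
  refine ⟨fun h => ?_, by rintro ⟨rfl, rfl⟩; simp⟩
  have ha : (a - 1) • P = 0 := by
    have hP' := congrArg (· * P) h
    simp only [add_mul, smul_mul_assoc, hP.eq, hP.one_sub_mul_self, smul_zero, add_zero,
      one_mul] at hP'
    rw [sub_smul, hP', one_smul, sub_self]
  have hb : (b - 1) • (1 - P) = 0 := by
    have hP' := congrArg (· * (1 - P)) h
    simp only [add_mul, smul_mul_assoc, hP.one_sub.eq, hP.mul_one_sub_self, smul_zero, zero_add,
      one_mul] at hP'
    rw [sub_smul, hP', one_smul, sub_self]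
  rw [smul_eq_zero, sub_eq_zero] at ha hb
  exact ⟨ha.resolve_right hP0, hb.resolve_right (sub_ne_zero.mpr hP1.symm)⟩

theorem IsIdempotentElem.exp_smul_add_smul_one_sub [Algebra ℂ A] [TopologicalSpace A]
    [IsTopologicalRing A] [T2Space A] [ContinuousSMul ℂ A] (hP : IsIdempotentElem P) (a b : ℂ) :
    NormedSpace.exp (a • P + b • (1 - P)) = Complex.exp a • P + Complex.exp b • (1 - P) := by
  have hsum (z : ℂ) : HasSum (fun n : ℕ => (n.factorial⁻¹ : ℂ) • z ^ n) (Complex.exp z) := by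
    rw [Complex.exp_eq_exp_ℂ]
    exact NormedSpace.exp_series_hasSum_exp' z
  rw [NormedSpace.exp_eq_tsum ℂ]
  refine Eq.trans ?_ (((hsum a).smul_const P).add ((hsum b).smul_const (1 - P))).tsum_eq
  refine tsum_congr fun n => ?_
  rw [hP.smul_add_smul_one_sub_pow, smul_add, smul_smul, smul_smul, smul_eq_mul, smul_eq_mul]

end Idempotent

section SquareRootOfScalar

variable {K A : Type*} [Field K] [NeZero (2 : K)] [Ring A] [Algebra K A] {F : A} {μ : K}

theorem isIdempotentElem_half_smul_one_add_inv_smul (hμ : μ ≠ 0) (hF : F * F = μ ^ 2 • 1) :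
    IsIdempotentElem ((2 : K)⁻¹ • (1 + μ⁻¹ • F)) := by
  unfold IsIdempotentElem
  simp only [smul_mul_smul_comm, add_mul, mul_add, one_mul, mul_one, hF, smul_smul]
  match_scalars <;> field_simp <;> ring

theorem smul_eq_smul_half_smul_one_add_inv_smul_add (hμ : μ ≠ 0) (t : K) :
    t • F = (t * μ) • ((2 : K)⁻¹ • (1 + μ⁻¹ • F)) +
      (-(t * μ)) • (1 - (2 : K)⁻¹ • (1 + μ⁻¹ • F)) := by
  match_scalars <;> field_simp <;> ring

theorem half_smul_one_add_inv_smul_notMem_range (hμ : μ ≠ 0)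
    (hFs : F ∉ Set.range (algebraMap K A)) :
    (2 : K)⁻¹ • (1 + μ⁻¹ • F) ∉ Set.range (algebraMap K A) := by
  rintro ⟨c, hc⟩
  refine hFs ⟨μ * c + -μ * (1 - c), ?_⟩
  rw [← one_smul K F, smul_eq_smul_half_smul_one_add_inv_smul_add hμ, ← hc]
  simp only [Algebra.algebraMap_eq_smul_one]
  module

end SquareRootOfScalar

theorem exp_smul_eq_one_iff_of_mul_self_eq {A : Type*} [Ring A] [Algebra ℂ A]
    [TopologicalSpace A] [IsTopologicalRing A] [T2Space A] [ContinuousSMul ℂ A] {F : A} {μ : ℂ}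
    (hμ : μ ≠ 0) (hF : F * F = μ ^ 2 • 1) (hFs : F ∉ Set.range (algebraMap ℂ A)) (t : ℂ) :
    NormedSpace.exp (t • F) = 1 ↔ Complex.exp (t * μ) = 1 := by
  have hP := isIdempotentElem_half_smul_one_add_inv_smul hμ hF
  have hPs := half_smul_one_add_inv_smul_notMem_range hμ hFs
  rw [smul_eq_smul_half_smul_one_add_inv_smul_add hμ t, hP.exp_smul_add_smul_one_sub,
    hP.smul_add_smul_one_sub_eq_one_iff (fun h => hPs ⟨0, by simp [h]⟩)
      (fun h => hPs ⟨1, by simp [h]⟩), Complex.exp_neg, inv_eq_one, and_self]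

namespace Matrix

variable {K : Type*} [Field K]

theorem trace_sub_half_trace_smul_one [NeZero (2 : K)] (x : Matrix (Fin 2) (Fin 2) K) :
    trace (x - (trace x / 2) • (1 : Matrix (Fin 2) (Fin 2) K)) = 0 := by
  rw [trace_sub, trace_smul, trace_one, Fintype.card_fin, smul_eq_mul]
  field_simp
  ring

theorem sub_half_trace_smul_one_mul_self [NeZero (2 : K)] (x : Matrix (Fin 2) (Fin 2) K) :
    (x - (trace x / 2) • (1 : Matrix (Fin 2) (Fin 2) K)) *
        (x - (trace x / 2) • (1 : Matrix (Fin 2) (Fin 2) K)) =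
      ((trace x / 2) ^ 2 - det x) • (1 : Matrix (Fin 2) (Fin 2) K) := by
  ext i j
  fin_cases i <;> fin_cases j <;>
    simp [mul_apply, trace_fin_two, det_fin_two] <;> field_simp <;> ring

theorem notMem_range_algebraMap_of_trace_eq_zero {n : Type*} [Fintype n] [DecidableEq n]
    [Nonempty n] [CharZero K] {F : Matrix n n K} (htr : trace F = 0) (hF : F ≠ 0) :
    F ∉ Set.range (algebraMap K (Matrix n n K)) := by
  rintro ⟨c, rfl⟩
  rw [Algebra.algebraMap_eq_smul_one, trace_smul, trace_one, smul_eq_mul, mul_eq_zero] at htr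
  simp_all [Fintype.card_ne_zero]

theorem star_trace_of_mem_specialUnitaryGroup {α : Type*} [CommRing α] [StarRing α]
    {x : Matrix (Fin 2) (Fin 2) α} (hx : x ∈ specialUnitaryGroup (Fin 2) α) :
    star (trace x) = trace x := by
  obtain ⟨hu, hdet⟩ := mem_specialUnitaryGroup_iff.mp hx
  have hstar : star x = adjugate x := by
    rw [← inv_eq_left_inv (mem_unitaryGroup_iff'.mp hu), inv_def, hdet, Ring.inverse_one, one_smul]
  rw [← trace_conjTranspose, ← star_eq_conjTranspose, hstar, adjugate_fin_two, trace_fin_two,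
    trace_fin_two]
  simp [add_comm]

theorem sub_half_trace_smul_one_mul_self_of_mem_specialUnitaryGroup
    {x : Matrix (Fin 2) (Fin 2) ℂ} (hx : x ∈ specialUnitaryGroup (Fin 2) ℂ) :
    (x - (trace x / 2) • (1 : Matrix (Fin 2) (Fin 2) ℂ)) *
        (x - (trace x / 2) • (1 : Matrix (Fin 2) (Fin 2) ℂ)) =
      ((((trace x).re / 2) ^ 2 - 1 : ℝ) : ℂ) • (1 : Matrix (Fin 2) (Fin 2) ℂ) := by
  have htr : trace x = ((trace x).re : ℂ) :=
    (Complex.conj_eq_iff_re.mp (star_trace_of_mem_specialUnitaryGroup hx)).symm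
  rw [sub_half_trace_smul_one_mul_self, (mem_specialUnitaryGroup_iff.mp hx).2, htr]
  push_cast
  rfl

end Matrix

theorem Real.sin_arccos_sq_of_pos {r : ℝ} (h : 0 < Real.sin (Real.arccos r)) :
    Real.sin (Real.arccos r) ^ 2 = 1 - r ^ 2 := by
  rw [Real.sin_arccos] at h ⊢
  exact Real.sq_sqrt (Real.sqrt_pos.mp h).le

theorem Complex.exp_ofReal_mul_I_mul_eq_one_iff {σ : ℝ} (hσ : σ ≠ 0) (t : ℝ) :
    Complex.exp (t * (I * σ)) = 1 ↔ ∃ k : ℤ, t = k * (2 * Real.pi / σ) := by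
  rw [Complex.exp_eq_one_iff]
  refine exists_congr fun k => ?_
  rw [mul_div_assoc', eq_div_iff hσ, ← Complex.ofReal_inj]
  push_cast
  constructor
  · intro h
    exact mul_left_cancel₀ Complex.I_ne_zero (by linear_combination h)
  · intro h
    linear_combination I * h

/-- For `x ∈ SU(2)` with `x ≠ ±id` and angle `θ = arccos(tr x / 2) ∈ (0,π)`,
`ζ^t(x) = exp(t·(x - (tr x/2)·id))` equals the identity iff `t ∈ (2π/sin θ)·ℤ`;
and if `x = ±id` then `ζ^t(x) = id` for all `t`. -/
theorem stmt_8 (x : Matrix (Fin 2) (Fin 2) ℂ) (θ : ℝ)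
    (hx : x ∈ Matrix.specialUnitaryGroup (Fin 2) ℂ)
    (hθ : θ = Real.arccos ((Matrix.trace x).re / 2)) :
    ((x ≠ 1 ∧ x ≠ -1 ∧ θ ∈ Set.Ioo 0 Real.pi) →
      ∀ t : ℝ,
        NormedSpace.exp ((t : ℂ) •
            (x - (Matrix.trace x / 2) • (1 : Matrix (Fin 2) (Fin 2) ℂ))) = 1 ↔
          ∃ k : ℤ, t = k * (2 * Real.pi / Real.sin θ)) ∧
    ((x = 1 ∨ x = -1) →
      ∀ t : ℝ,
        NormedSpace.exp ((t : ℂ) •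
            (x - (Matrix.trace x / 2) • (1 : Matrix (Fin 2) (Fin 2) ℂ))) = 1) := by
  refine ⟨?_, by rintro (rfl | rfl) t <;> simp⟩
  rintro ⟨-, -, hθ0, hθπ⟩ t
  set F := x - (trace x / 2) • (1 : Matrix (Fin 2) (Fin 2) ℂ)
  have hσ : 0 < Real.sin θ := Real.sin_pos_of_pos_of_lt_pi hθ0 hθπ
  have hsin : Real.sin θ ^ 2 = 1 - ((trace x).re / 2) ^ 2 := by
    subst hθ
    exact Real.sin_arccos_sq_of_pos hσ
  have hμ : Complex.I * Real.sin θ ≠ 0 := mul_ne_zero Complex.I_ne_zero (by exact_mod_cast hσ.ne')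
  have hF : F * F = (Complex.I * Real.sin θ) ^ 2 • 1 := by
    rw [sub_half_trace_smul_one_mul_self_of_mem_specialUnitaryGroup hx, mul_pow, Complex.I_sq,
      ← Complex.ofReal_pow, hsin]
    congr 1
    push_cast
    ring
  have hF0 : F ≠ 0 := by
    rintro h0
    rw [h0, zero_mul, eq_comm, smul_eq_zero] at hF
    exact hF.elim (fun h => hμ (pow_eq_zero_iff two_ne_zero |>.mp h)) one_ne_zero
  rw [exp_smul_eq_one_iff_of_mul_self_eq hμ hF
    (notMem_range_algebraMap_of_trace_eq_zero (trace_sub_half_trace_smul_one x) hF0),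
    Complex.exp_ofReal_mul_I_mul_eq_one_iff hσ.ne']
end

section
/- Let G be a compact connected Lie group acting continuously, freely, and measurably on a separable, complete, metrizable, locally compact space X whose orbits are compact (hence locally closed). Then there exists a Borel cross section S ⊆ X meeting each orbit exactly once, and S is bimeasurable to the quotient X/G. -/
/-!
Fix a dense sequence `(dₙ)` in `X` and, on the orbit of `x`, minimise the distances
`edist (g • x) dₙ` lexicographically in `n` over `g ∈ G`. Since `G` is compact, the successive sets
of minimisers are nonempty and compact, so one `g` attains all the minimal values at once; as a
point of `X` is determined by its distances to `(dₙ)` and the minimal values only depend on the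
orbit, `g • x` is a canonical representative of the orbit. The minimal values are Borel in `x`:
an infimum over the compact constraint set is a supremum of infima over shrinking open
neighbourhoods of it, and those are infima over a countable dense subset of `G`. The
representative is then Borel, because `x ↦ (dist x dₙ)ₙ` is a continuous injection of the Polish
space `X`, and its fixed points form the cross section.
-/

open Set Filter Topology
open scoped ENNReal

theorem Function.Surjective.biInf_comp_preimage {α β γ : Type*} [CompleteLattice γ] {e : α → β}
    (he : e.Surjective) (s : Set β) (φ : β → γ) : ⨅ a ∈ e ⁻¹' s, φ (e a) = ⨅ b ∈ s, φ b := by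
  rw [← iInf_image, he.image_preimage]

section LexMin

variable {G α : Type*} [CompleteLinearOrder α] (f : ℕ → G → α)

def lexMinSet : ℕ → Set G
  | 0 => univ
  | n + 1 => {g ∈ lexMinSet n | f n g = ⨅ h ∈ lexMinSet n, f n h}

def lexMinVal (n : ℕ) : α := ⨅ g ∈ lexMinSet f n, f n g

variable {f}

theorem lexMinVal_le {n : ℕ} {g : G} (hg : g ∈ lexMinSet f n) : lexMinVal f n ≤ f n g :=
  iInf₂_le g hg

theorem lexMinSet_succ (n : ℕ) :
    lexMinSet f (n + 1) = lexMinSet f n ∩ f n ⁻¹' Iic (lexMinVal f n) := by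
  ext g
  exact and_congr_right fun hg => (lexMinVal_le hg).ge_iff_eq'.symm

theorem mem_lexMinSet_iff {n : ℕ} {g : G} :
    g ∈ lexMinSet f n ↔ ∀ i < n, f i g ≤ lexMinVal f i := by
  induction n with
  | zero => simp [lexMinSet]
  | succ n ih => rw [Nat.forall_lt_succ_right, lexMinSet_succ, mem_inter_iff, ih]; rfl

theorem lexMinSet_antitone : Antitone (lexMinSet f) :=
  antitone_nat_of_succ_le fun n => by rw [lexMinSet_succ]; exact inter_subset_left

theorem apply_eq_lexMinVal_of_mem_iInter {g : G} (hg : g ∈ ⋂ n, lexMinSet f n) (n : ℕ) :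
    f n g = lexMinVal f n :=
  (mem_iInter.1 hg (n + 1)).2

section Surjective

variable {G' : Type*} {e : G' → G} (he : e.Surjective)
include he

theorem lexMinSet_comp_surjective (n : ℕ) :
    lexMinSet (fun i => f i ∘ e) n = e ⁻¹' lexMinSet f n := by
  induction n with
  | zero => rfl
  | succ n ih =>
    have hval : lexMinVal (fun i => f i ∘ e) n = lexMinVal f n := by
      rw [lexMinVal, ih]; exact he.biInf_comp_preimage _ _
    rw [lexMinSet_succ, lexMinSet_succ, ih, hval]; rfl

theorem lexMinVal_comp_surjective : lexMinVal (fun i => f i ∘ e) = lexMinVal f :=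
  funext fun n => by
    rw [lexMinVal, lexMinSet_comp_surjective he]; exact he.biInf_comp_preimage _ _

end Surjective

variable [TopologicalSpace G] (hf : ∀ n, LowerSemicontinuous (f n))
include hf

theorem isClosed_lexMinSet (n : ℕ) : IsClosed (lexMinSet f n) := by
  induction n with
  | zero => exact isClosed_univ
  | succ n ih => rw [lexMinSet_succ]; exact ih.inter ((hf n).isClosed_preimage _)

variable [CompactSpace G] [Nonempty G]

theorem lexMinSet_nonempty (n : ℕ) : (lexMinSet f n).Nonempty := by
  induction n with
  | zero => exact univ_nonempty
  | succ n ih =>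
    obtain ⟨g, hg, hmin⟩ :=
      ((hf n).lowerSemicontinuousOn _).exists_isMinOn ih (isClosed_lexMinSet hf n).isCompact
    rw [lexMinSet_succ]
    exact ⟨g, hg, le_iInf₂ fun h hh => hmin hh⟩

theorem iInter_lexMinSet_nonempty : (⋂ n, lexMinSet f n).Nonempty :=
  IsCompact.nonempty_iInter_of_sequence_nonempty_isCompact_isClosed _
    (fun n => lexMinSet_antitone n.le_succ) (lexMinSet_nonempty hf)
    (isClosed_lexMinSet hf 0).isCompact (isClosed_lexMinSet hf)

end LexMin

section Approximation

variable {G α : Type*} [TopologicalSpace G] [CompleteLinearOrder α] {φ : G → α}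

theorem iSup_biInf_eq_biInf_of_iInter_closure_subset [CompactSpace G]
    (hφ : LowerSemicontinuous φ) {V : ℕ → Set G} (hV : Antitone V) {K : Set G}
    (hK : K.Nonempty) (hKV : ∀ k, K ⊆ V k) (hVK : ⋂ k, closure (V k) ⊆ K) :
    ⨆ k, ⨅ g ∈ V k, φ g = ⨅ g ∈ K, φ g := by
  refine le_antisymm (iSup_le fun k => biInf_mono (hKV k)) ?_
  set c := ⨆ k, ⨅ g ∈ V k, φ g
  have hne (k : ℕ) : (closure (V k) ∩ φ ⁻¹' Iic c).Nonempty := by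
    obtain ⟨g, hg, hmin⟩ := (hφ.lowerSemicontinuousOn _).exists_isMinOn
      (hK.mono ((hKV k).trans subset_closure)) isClosed_closure.isCompact
    have hgV : φ g ≤ ⨅ h ∈ V k, φ h := le_iInf₂ fun h hh => hmin (subset_closure hh)
    exact ⟨g, hg, hgV.trans (le_iSup_of_le k le_rfl)⟩
  obtain ⟨g, hg⟩ := IsCompact.nonempty_iInter_of_sequence_nonempty_isCompact_isClosed _
    (fun k => inter_subset_inter_left _ (closure_mono (hV k.le_succ))) hne
    (isClosed_closure.inter (hφ.isClosed_preimage c)).isCompact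
    (fun k => isClosed_closure.inter (hφ.isClosed_preimage c))
  rw [mem_iInter] at hg
  exact iInf₂_le_of_le g (hVK (mem_iInter.2 fun k => (hg k).1)) (hg 0).2

theorem IsOpen.biInf_eq_iInf_denseRange (hφ : UpperSemicontinuous φ) {U : Set G}
    (hU : IsOpen U) {ι : Type*} {D : ι → G} (hD : DenseRange D) :
    ⨅ g ∈ U, φ g = ⨅ j, ⨅ (_ : D j ∈ U), φ (D j) := by
  refine le_antisymm (le_iInf₂ fun j hj => iInf₂_le (D j) hj) (le_iInf₂ fun g hg => ?_)
  by_contra! h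
  obtain ⟨j, hjU, hj⟩ := hD.exists_mem_open (hU.inter (hφ.isOpen_preimage _)) ⟨g, hg, h⟩
  exact (iInf₂_le (f := fun j (_ : D j ∈ U) => φ (D j)) j hjU).not_gt hj

end Approximation

section Measurability

variable {G X : Type*} [TopologicalSpace G] [CompactSpace G]

theorem lexMinVal_ne_top [Nonempty G] {f : ℕ → G → ℝ≥0∞} (hf : ∀ n, LowerSemicontinuous (f n))
    (hfin : ∀ n g, f n g ≠ ⊤) (n : ℕ) : lexMinVal f n ≠ ⊤ :=
  let ⟨_, hg⟩ := lexMinSet_nonempty hf n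
  ne_top_of_le_ne_top (hfin n _) (lexMinVal_le hg)

theorem lexMinVal_eq_iSup_iInf_denseRange {f : ℕ → G → ℝ≥0∞} (hf : ∀ n, Continuous (f n))
    (hfin : ∀ n g, f n g ≠ ⊤) {D : ℕ → G} (hD : DenseRange D) (n : ℕ) :
    lexMinVal f n = ⨆ k : ℕ,
      ⨅ j, ⨅ (_ : ∀ i < n, f i (D j) < lexMinVal f i + (k : ℝ≥0∞)⁻¹), f n (D j) := by
  have : Nonempty G := ⟨D 0⟩
  have hlsc (i : ℕ) : LowerSemicontinuous (f i) := (hf i).lowerSemicontinuous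
  set V : ℕ → Set G := fun k => {g | ∀ i < n, f i g < lexMinVal f i + (k : ℝ≥0∞)⁻¹}
  have hVopen (k : ℕ) : IsOpen (V k) := by
    simp only [V, ofPred_forall]
    exact (finite_Iio n).isOpen_biInter fun i _ => isOpen_lt (hf i) continuous_const
  have hVanti : Antitone V := fun k l hkl g hg i hi =>
    (hg i hi).trans_le (add_le_add_right (ENNReal.inv_le_inv.2 (Nat.cast_le.2 hkl)) _)
  have hKV (k : ℕ) : lexMinSet f n ⊆ V k := fun g hg i hi => by
    rw [(mem_lexMinSet_iff.1 hg i hi).antisymm (lexMinVal_le (lexMinSet_antitone hi.le hg))]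
    exact ENNReal.lt_add_right (lexMinVal_ne_top hlsc hfin i) (by simp)
  have hVK : ⋂ k, closure (V k) ⊆ lexMinSet f n := fun g hg => by
    refine mem_lexMinSet_iff.2 fun i hi => ?_
    have hlim : Tendsto (fun k : ℕ => lexMinVal f i + (k : ℝ≥0∞)⁻¹) atTop
        (𝓝 (lexMinVal f i)) := by
      simpa using tendsto_const_nhds.add ENNReal.tendsto_inv_nat_nhds_zero
    exact ge_of_tendsto' hlim fun k => closure_lt_subset_le (hf i) continuous_const
      (closure_mono (fun g (hg : g ∈ V k) => hg i hi) (mem_iInter.1 hg k))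
  rw [lexMinVal, ← iSup_biInf_eq_biInf_of_iInter_closure_subset (hlsc n) hVanti
    (lexMinSet_nonempty hlsc n) hKV hVK]
  exact iSup_congr fun k => (hVopen k).biInf_eq_iInf_denseRange (hf n).upperSemicontinuous hD

theorem measurable_lexMinVal [MeasurableSpace X] [TopologicalSpace.SeparableSpace G] [Nonempty G]
    {φ : X → ℕ → G → ℝ≥0∞} (hcont : ∀ x n, Continuous (φ x n))
    (hmeas : ∀ n g, Measurable fun x => φ x n g) (hfin : ∀ x n g, φ x n g ≠ ⊤) (n : ℕ) :
    Measurable fun x => lexMinVal (φ x) n := by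
  classical
  obtain ⟨D, hD⟩ := TopologicalSpace.exists_dense_seq G
  induction n using Nat.strong_induction_on with
  | _ n ih =>
  simp_rw [lexMinVal_eq_iSup_iInf_denseRange (hcont _) (hfin _) hD n, iInf_eq_if]
  refine .iSup fun k => .iInf fun j => Measurable.ite ?_ (hmeas n (D j)) measurable_const
  simp only [ofPred_forall]
  exact .iInter fun i => .iInter fun hi =>
    measurableSet_lt (hmeas i (D j)) ((ih i hi).add_const _)

end Measurability

theorem DenseRange.eq_of_forall_dist_eq {X : Type*} [MetricSpace X] {d : ℕ → X}
    (hd : DenseRange d) {x y : X} (h : ∀ n, dist x (d n) = dist y (d n)) : x = y :=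
  (KuratowskiEmbedding.embeddingOfSubset_isometry d hd).injective <| lp.ext <| funext fun n => by
    simp [KuratowskiEmbedding.embeddingOfSubset_coe, h n]

theorem DenseRange.measurable_of_measurable_dist {X Y : Type*} [MetricSpace X]
    [TopologicalSpace.SeparableSpace X] [CompleteSpace X] [MeasurableSpace X] [BorelSpace X]
    [MeasurableSpace Y] {d : ℕ → X} (hd : DenseRange d) {r : Y → X}
    (hr : ∀ n, Measurable fun y => dist (r y) (d n)) : Measurable r := by
  have hι : MeasurableEmbedding fun (x : X) (n : ℕ) => dist x (d n) :=
    (continuous_pi fun n => continuous_id.dist continuous_const).measurableEmbedding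
      fun x y hxy => hd.eq_of_forall_dist_eq (congrFun hxy)
  exact hι.measurable_comp_iff.1 (measurable_pi_lambda _ hr)

section Action

variable (G : Type*) {X : Type*} [Group G] [MulAction G X] [MetricSpace X]

def orbitEDist (d : ℕ → X) (x : X) (n : ℕ) (g : G) : ℝ≥0∞ := edist (g • x) (d n)

variable {G} {d : ℕ → X}

theorem lexMinVal_orbitEDist_smul (h : G) (x : X) :
    lexMinVal (orbitEDist G d (h • x)) = lexMinVal (orbitEDist G d x) := by
  have : orbitEDist G d (h • x) = fun n => orbitEDist G d x n ∘ (· * h) := by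
    ext n g; simp [orbitEDist, mul_smul]
  rw [this, lexMinVal_comp_surjective (mul_right_surjective h)]

variable [TopologicalSpace G] [ContinuousSMul G X]

theorem continuous_orbitEDist (x : X) (n : ℕ) : Continuous (orbitEDist G d x n) :=
  (continuous_id.smul continuous_const).edist continuous_const

variable [CompactSpace G]

variable (G d) in
noncomputable def lexMinRep (x : X) : X :=
  (iInter_lexMinSet_nonempty fun n =>
    (continuous_orbitEDist (G := G) (d := d) x n).lowerSemicontinuous).some • x

theorem lexMinRep_mem_orbit (x : X) : lexMinRep G d x ∈ MulAction.orbit G x :=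
  MulAction.mem_orbit x _

theorem edist_lexMinRep (x : X) (n : ℕ) :
    edist (lexMinRep G d x) (d n) = lexMinVal (orbitEDist G d x) n :=
  apply_eq_lexMinVal_of_mem_iInter (f := orbitEDist G d x) (Nonempty.some_mem _) n

theorem lexMinRep_smul (hd : DenseRange d) (h : G) (x : X) :
    lexMinRep G d (h • x) = lexMinRep G d x :=
  hd.eq_of_forall_dist_eq fun n => by
    rw [dist_edist, dist_edist, edist_lexMinRep, edist_lexMinRep, lexMinVal_orbitEDist_smul]

theorem measurable_lexMinRep [TopologicalSpace.SeparableSpace G]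
    [TopologicalSpace.SeparableSpace X] [CompleteSpace X] [MeasurableSpace X] [BorelSpace X]
    (hd : DenseRange d) :
    Measurable (lexMinRep G d) := by
  refine hd.measurable_of_measurable_dist fun n => ?_
  simp_rw [dist_edist, edist_lexMinRep]
  refine (measurable_lexMinVal continuous_orbitEDist (fun n g => ?_)
    (fun x n g => edist_ne_top _ _) n).ennreal_toReal
  exact ((continuous_const_smul g).edist continuous_const).measurable

end Action

namespace MulAction

variable {G X : Type*} [Group G] [MulAction G X] [MeasurableSpace X]

theorem exists_measurable_retraction [TopologicalSpace G] [CompactSpace G]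
    [TopologicalSpace.SeparableSpace G] [MetricSpace X] [TopologicalSpace.SeparableSpace X]
    [CompleteSpace X] [BorelSpace X] [ContinuousSMul G X] :
    ∃ r : X → X, Measurable r ∧ (∀ x, r x ∈ orbit G x) ∧ ∀ (g : G) x, r (g • x) = r x := by
  rcases isEmpty_or_nonempty X with hX | hX
  · exact ⟨id, measurable_id, isEmptyElim, fun _ => isEmptyElim⟩
  obtain ⟨d, hd⟩ := TopologicalSpace.exists_dense_seq X
  exact ⟨lexMinRep G d, measurable_lexMinRep hd, lexMinRep_mem_orbit, lexMinRep_smul hd⟩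

theorem exists_crossSection_of_retraction [MeasurableEq X] {r : X → X} (hr : Measurable r)
    (hr_mem : ∀ x, r x ∈ orbit G x) (hr_smul : ∀ (g : G) x, r (g • x) = r x) :
    ∃ S : Set X, MeasurableSet S ∧ (∀ x, ∃! s, s ∈ S ∩ orbit G x) ∧
      ∃ e : S ≃ᵐ Quotient (orbitRel G X), ∀ s : S, e s = Quotient.mk (orbitRel G X) (s : X) := by
  have hr_orbit (x y : X) (hy : y ∈ orbit G x) : r y = r x := by
    obtain ⟨g, rfl⟩ := hy
    exact hr_smul g x
  have hr_idem (x : X) : r (r x) = r x := hr_orbit x (r x) (hr_mem x)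
  refine ⟨{x | r x = x}, measurableSet_eq_fun hr measurable_id,
    fun x => ⟨r x, ⟨hr_idem x, hr_mem x⟩, fun y ⟨hy, hyx⟩ => hy.symm.trans (hr_orbit x y hyx)⟩,
    ⟨⟨fun s => Quotient.mk _ s, Quotient.lift (fun x => ⟨r x, hr_idem x⟩)
        fun x y h => Subtype.ext (hr_orbit y x h), fun s => Subtype.ext s.2,
        fun q => q.inductionOn fun x => Quotient.sound (hr_mem x)⟩,
      measurable_quotient_mk''.comp measurable_subtype_coe, hr.subtype_mk⟩, fun s => rfl⟩

end MulAction

open Manifold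

theorem stmt_14_general {E : Type*} [NormedAddCommGroup E] [NormedSpace ℝ E]
    [FiniteDimensional ℝ E]
    {G : Type*} [TopologicalSpace G] [ChartedSpace E G] [Group G]
    [CompactSpace G]
    {X : Type*} [MetricSpace X] [TopologicalSpace.SeparableSpace X] [CompleteSpace X]
    [MeasurableSpace X] [BorelSpace X]
    [MulAction G X] (hc : Continuous fun p : G × X => p.1 • p.2) :
    ∃ S : Set X, MeasurableSet S ∧
      (∀ x : X, ∃! s : X, s ∈ S ∩ MulAction.orbit G x) ∧
      ∃ e : S ≃ᵐ Quotient (MulAction.orbitRel G X),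
        ∀ s : S, e s = Quotient.mk (MulAction.orbitRel G X) (s : X) := by
  have : ContinuousSMul G X := ⟨hc⟩
  have : SecondCountableTopology G := ChartedSpace.secondCountable_of_sigmaCompact E G
  obtain ⟨r, hr, hr_mem, hr_smul⟩ := MulAction.exists_measurable_retraction (G := G) (X := X)
  exact MulAction.exists_crossSection_of_retraction hr hr_mem hr_smul

/-- Effros–Bondar: a compact connected Lie group acting continuously, freely and
measurably on a separable complete metrizable locally compact space with compact
orbits admits a Borel cross section, bimeasurable to the orbit space. -/
theorem stmt_14 {E : Type*} [NormedAddCommGroup E] [NormedSpace ℝ E]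
    [FiniteDimensional ℝ E]
    {G : Type*} [TopologicalSpace G] [ChartedSpace E G] [Group G] [IsTopologicalGroup G]
    [LieGroup 𝓘(ℝ, E) (⊤ : ℕ∞) G] [CompactSpace G] [ConnectedSpace G]
    {X : Type*} [MetricSpace X] [TopologicalSpace.SeparableSpace X] [CompleteSpace X]
    [LocallyCompactSpace X] [MeasurableSpace X] [BorelSpace X]
    [MulAction G X] (hc : Continuous fun p : G × X => p.1 • p.2)
    (hfree : ∀ (g : G) (x : X), g • x = x → g = 1)
    (horb : ∀ x : X, IsCompact (MulAction.orbit G x)) :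
    ∃ S : Set X, MeasurableSet S ∧
      (∀ x : X, ∃! s : X, s ∈ S ∩ MulAction.orbit G x) ∧
      ∃ e : S ≃ᵐ Quotient (MulAction.orbitRel G X),
        ∀ s : S, e s = Quotient.mk (MulAction.orbitRel G X) (s : X) :=
  stmt_14_general (E := E) hc
end
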